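/- Let F be an APN function on F_2^m, u ∈ F_2^m nonzero, and define the counting function n_u : F_2^m → F_2 by n_u(v) = 1 if F(x+u)+F(x)=v has exactly 2 solutions and n_u(v) = 0 if it has no solutions. Then for every nonzero b ∈ F_2^m, the Walsh coefficient of n_u at b equals minus the autocorrelation of the component F_b at u: W_{n_u}(b) = −(F_b ⋆ F_b)(u); moreover W_{n_u}(0) = 0. -/

import Mathlib

open Finset

/-- Dot product on `F_2^m`. -/
def dot {m : ℕ} (a x : Fin m → ZMod 2) : ZMod 2 := ∑ i, a i * x i

/-- Walsh coefficient of a Boolean function. -/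
def walsh {m : ℕ} (f : (Fin m → ZMod 2) → ZMod 2) (a : Fin m → ZMod 2) : ℤ :=
  ∑ x : Fin m → ZMod 2, (-1 : ℤ) ^ (f x + dot a x).val

/-- Autocorrelation of a Boolean function at `t`. -/
def autocorr {m : ℕ} (f : (Fin m → ZMod 2) → ZMod 2) (t : Fin m → ZMod 2) : ℤ :=
  ∑ x : Fin m → ZMod 2, (-1 : ℤ) ^ (f x + f (x + t)).val

/-- `F` is almost perfect nonlinear: every derivative equation has at most 2 solutions. -/
def IsAPN {m : ℕ} (F : (Fin m → ZMod 2) → (Fin m → ZMod 2)) : Prop :=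
  ∀ u : Fin m → ZMod 2, u ≠ 0 → ∀ v : Fin m → ZMod 2,
    (Finset.univ.filter (fun x : Fin m → ZMod 2 => F (x + u) + F x = v)).card ≤ 2

/-- The counting function `n_u` of an APN function `F` in direction `u ≠ 0`. -/
def countFun {m : ℕ} (F : (Fin m → ZMod 2) → (Fin m → ZMod 2)) (u : Fin m → ZMod 2)
    (v : Fin m → ZMod 2) : ZMod 2 :=
  if (Finset.univ.filter (fun x : Fin m → ZMod 2 => F (x + u) + F x = v)).card = 2 then 1 else 0

/-! Writing `χ_b(v) = (-1)^(b·v)`, APN-ness makes every fibre of `D_u F(x) = F(x+u) + F(x)` have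
`0` or `2` elements (it is stable under `x ↦ x + u`), so `(-1)^(n_u(v)) = 1 - #(D_u F)⁻¹(v)`.
Summing against `χ_b` gives `W_{n_u}(b) = ∑_v χ_b(v) - ∑_x χ_b(D_u F(x))`. The second sum is the
autocorrelation of `F_b` at `u`; the first vanishes for `b ≠ 0` by orthogonality of characters, and
for `b = 0` both sums equal `2^m`. -/

section DerivFiber

variable {G H : Type*} [AddCommGroup G] [Fintype G] [AddCommGroup H] [DecidableEq H]

def derivFiber (F : G → H) (u : G) (v : H) : Finset G := {x | F (x + u) + F x = v}

lemma mem_derivFiber {F : G → H} {u : G} {v : H} {x : G} :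
    x ∈ derivFiber F u v ↔ F (x + u) + F x = v := by
  simp [derivFiber]

lemma add_mem_derivFiber [Module (ZMod 2) G] {F : G → H} {u : G} {v : H} {x : G}
    (hx : x ∈ derivFiber F u v) : x + u ∈ derivFiber F u v := by
  rw [mem_derivFiber] at hx ⊢
  rwa [add_assoc, ZModModule.add_self, add_zero, add_comm]

lemma two_le_card_derivFiber [Module (ZMod 2) G] {F : G → H} {u : G} {v : H} (hu : u ≠ 0)
    (hne : (derivFiber F u v).Nonempty) : 2 ≤ #(derivFiber F u v) := by
  obtain ⟨x, hx⟩ := hne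
  exact one_lt_card.2 ⟨x, hx, x + u, add_mem_derivFiber hx, by simpa using hu⟩

lemma sum_card_derivFiber_nsmul [Fintype H] {M : Type*} [AddCommMonoid M] (F : G → H) (u : G)
    (g : H → M) : ∑ v, #(derivFiber F u v) • g v = ∑ x, g (F (x + u) + F x) := by
  simp_rw [← sum_const]
  exact sum_fiberwise' univ (fun x => F (x + u) + F x) g

end DerivFiber

lemma neg_one_pow_val_add (a b : ZMod 2) :
    (-1 : ℤ) ^ (a + b).val = (-1) ^ a.val * (-1) ^ b.val := by
  decide +revert

section Dot

variable {m : ℕ}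

lemma dot_add_right (b x y : Fin m → ZMod 2) : dot b (x + y) = dot b x + dot b y := by
  simp [dot, mul_add, sum_add_distrib]

lemma dot_zero_left (x : Fin m → ZMod 2) : dot 0 x = 0 := by
  simp [dot]

lemma dot_single_one (b : Fin m → ZMod 2) (i : Fin m) : dot b (Pi.single i 1) = b i := by
  simp [dot, Pi.single_apply]

def dotChar (b : Fin m → ZMod 2) : AddChar (Fin m → ZMod 2) ℤ where
  toFun v := (-1) ^ (dot b v).val
  map_zero_eq_one' := by simp [dot]
  map_add_eq_mul' x y := by simp only [dot_add_right, neg_one_pow_val_add]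

lemma dotChar_apply (b v : Fin m → ZMod 2) : dotChar b v = (-1) ^ (dot b v).val := rfl

lemma dotChar_ne_zero {b : Fin m → ZMod 2} (hb : b ≠ 0) : dotChar b ≠ 0 := by
  obtain ⟨i, hi⟩ := Function.ne_iff.1 hb
  have hbi : b i = 1 := Fin.eq_one_of_ne_zero (b i) hi
  refine AddChar.ne_zero_iff.2 ⟨Pi.single i 1, ?_⟩
  simp [dotChar_apply, dot_single_one, hbi, ZMod.val_one]

lemma walsh_eq_sum_mul_dotChar (f : (Fin m → ZMod 2) → ZMod 2) (b : Fin m → ZMod 2) :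
    walsh f b = ∑ v, (-1) ^ (f v).val * dotChar b v := by
  simp only [walsh, neg_one_pow_val_add, dotChar_apply]

lemma autocorr_dot_eq_sum_dotChar (F : (Fin m → ZMod 2) → (Fin m → ZMod 2))
    (b u : Fin m → ZMod 2) :
    autocorr (fun x => dot b (F x)) u = ∑ x, dotChar b (F (x + u) + F x) := by
  simp only [autocorr, dotChar_apply, dot_add_right, add_comm]

end Dot

lemma countFun_eq_ite {m : ℕ} (F : (Fin m → ZMod 2) → (Fin m → ZMod 2)) (u v : Fin m → ZMod 2) :
    countFun F u v = if #(derivFiber F u v) = 2 then 1 else 0 := rfl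

lemma neg_one_pow_countFun {m : ℕ} {F : (Fin m → ZMod 2) → (Fin m → ZMod 2)} (hF : IsAPN F)
    {u : Fin m → ZMod 2} (hu : u ≠ 0) (v : Fin m → ZMod 2) :
    (-1 : ℤ) ^ (countFun F u v).val = 1 - #(derivFiber F u v) := by
  have hle : #(derivFiber F u v) ≤ 2 := hF u hu v
  rcases (derivFiber F u v).eq_empty_or_nonempty with hempty | hne
  · simp [countFun_eq_ite, hempty]
  · have hcard : #(derivFiber F u v) = 2 := le_antisymm hle (two_le_card_derivFiber hu hne)
    simp [countFun_eq_ite, hcard, ZMod.val_one]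

lemma walsh_countFun_eq_sum_dotChar_sub_autocorr {m : ℕ}
    {F : (Fin m → ZMod 2) → (Fin m → ZMod 2)} (hF : IsAPN F) {u : Fin m → ZMod 2} (hu : u ≠ 0)
    (b : Fin m → ZMod 2) :
    walsh (countFun F u) b = ∑ v, dotChar b v - autocorr (fun x => dot b (F x)) u := by
  rw [walsh_eq_sum_mul_dotChar, autocorr_dot_eq_sum_dotChar, ← sum_card_derivFiber_nsmul,
    ← sum_sub_distrib]
  refine sum_congr rfl fun v _ => ?_
  rw [neg_one_pow_countFun hF hu, nsmul_eq_mul]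
  ring

/-- Walsh coefficients of the counting function of an APN function. -/
theorem walsh_countFun {m : ℕ} (F : (Fin m → ZMod 2) → (Fin m → ZMod 2)) (hF : IsAPN F)
    (u : Fin m → ZMod 2) (hu : u ≠ 0) :
    (∀ b : Fin m → ZMod 2, b ≠ 0 →
        walsh (countFun F u) b = - autocorr (fun x => dot b (F x)) u) ∧
      walsh (countFun F u) 0 = 0 := by
  refine ⟨fun b hb => ?_, ?_⟩
  · rw [walsh_countFun_eq_sum_dotChar_sub_autocorr hF hu,
      AddChar.sum_eq_zero_iff_ne_zero.2 (dotChar_ne_zero hb), zero_sub]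
  · rw [walsh_countFun_eq_sum_dotChar_sub_autocorr hF hu, sub_eq_zero]
    simp [dotChar_apply, autocorr, dot_zero_left]
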